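/- Let G be a group with a finite symmetric generating set S such that the word metric d_S is δ-hyperbolic for some real δ ≥ 0. Then every finite subgroup H of G is conjugate to a subgroup contained in the closed ball of radius 8δ + 4 around the identity: there exists x ∈ G with x⁻¹Hx ⊆ {g ∈ G : d_S(1,g) ≤ 8δ + 4}. -/
import Mathlib


/-- The word metric on a group `G` with respect to a generating set `S`:
`wordDist S x y` is the least `n` such that `x⁻¹ * y` is a product of `n` elements of `S`. -/
noncomputable def wordDist {G : Type*} [Group G] (S : Set G) (x y : G) : ℕ :=
  sInf {n : ℕ | ∃ l : List G, (∀ s ∈ l, s ∈ S) ∧ l.length = n ∧ x⁻¹ * y = l.prod}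

/-- A distance function `d` on `X` is `δ`-hyperbolic if for all `x,y,z,t` one has
`d x y + d z t ≤ max (d x z + d y t) (d x t + d y z) + 2δ`. -/
def IsHyperbolicDist {X : Type*} (d : X → X → ℝ) (δ : ℝ) : Prop :=
  ∀ x y z t : X, d x y + d z t ≤ max (d x z + d y t) (d x t + d y z) + 2 * δ

/-- The orbit `Hx = {h * x : h ∈ H}` of a point `x` under a subgroup `H`. -/
def orb {G : Type*} [Group G] (H : Subgroup G) (x : G) : Set G :=
  (fun h => h * x) '' (H : Set G)

/-- `setD S K L = max_{k ∈ K, l ∈ L} d_S(k,l)`, the maximal word-metric distance between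
the (finite) sets `K` and `L`.  `setD S K K` is the diameter of `K`. -/
noncomputable def setD {G : Type*} [Group G] (S : Set G) (K L : Set G) : ℕ :=
  sSup {n : ℕ | ∃ k ∈ K, ∃ l ∈ L, wordDist S k l = n}

section Aux

variable {G : Type*} [Group G] {S : Set G}

lemma wordDist_le {x y : G} {l : List G} (hl : ∀ s ∈ l, s ∈ S)
    (hp : x⁻¹ * y = l.prod) : wordDist S x y ≤ l.length :=
  Nat.sInf_le ⟨l, hl, rfl, hp⟩

lemma wordDist_spec (hsymm : S⁻¹ = S) (hgen : Subgroup.closure S = ⊤) (x y : G) :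
    ∃ l : List G, (∀ s ∈ l, s ∈ S) ∧ l.length = wordDist S x y ∧ x⁻¹ * y = l.prod := by
  have hx : x⁻¹ * y ∈ Submonoid.closure (S ∪ S⁻¹) := by
    rw [← Subgroup.closure_toSubmonoid]
    simp [hgen]
  rw [hsymm, Set.union_self] at hx
  obtain ⟨l, hl, hp⟩ := Submonoid.exists_list_of_mem_closure hx
  have hne : {n : ℕ | ∃ l : List G, (∀ s ∈ l, s ∈ S) ∧ l.length = n ∧ x⁻¹ * y = l.prod}.Nonempty :=
    ⟨l.length, l, hl, rfl, hp.symm⟩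
  exact (Nat.sInf_mem hne)

lemma wordDist_mul_left (g x y : G) : wordDist S (g * x) (g * y) = wordDist S x y := by
  unfold wordDist
  have : (g * x)⁻¹ * (g * y) = x⁻¹ * y := by group
  rw [this]

lemma wordDist_symm_le (hsymm : S⁻¹ = S) (hgen : Subgroup.closure S = ⊤) (x y : G) :
    wordDist S y x ≤ wordDist S x y := by
  obtain ⟨l, hl, hlen, hp⟩ := wordDist_spec hsymm hgen x y
  have : y⁻¹ * x = ((l.map (·⁻¹)).reverse).prod := by
    rw [← List.prod_inv_reverse, ← hp]; group
  calc wordDist S y x ≤ ((l.map (·⁻¹)).reverse).length := by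
        refine wordDist_le ?_ this
        intro s hs
        simp only [List.mem_reverse, List.mem_map] at hs
        obtain ⟨a, ha, rfl⟩ := hs
        rw [← hsymm]; exact Set.inv_mem_inv.mpr (hl a ha)
    _ = wordDist S x y := by simp [hlen]

end Aux

/-- In a δ-hyperbolic group, every finite subgroup is conjugate into the
closed ball of radius 8δ + 4 around the identity. -/
theorem finite_subgroup_conjugate_into_ball
    {G : Type*} [Group G] (S : Set G) (hfin : S.Finite) (hsymm : S⁻¹ = S)
    (hone : (1 : G) ∉ S) (hgen : Subgroup.closure S = ⊤)
    (δ : ℝ) (hδ : 0 ≤ δ)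
    (hhyp : IsHyperbolicDist (fun x y => (wordDist S x y : ℝ)) δ)
    (H : Subgroup G) (hH : ((H : Subgroup G) : Set G).Finite) :
    ∃ x : G, (fun h => x⁻¹ * h * x) '' (H : Set G) ⊆
      {g : G | (wordDist S 1 g : ℝ) ≤ 8 * δ + 4} := by
  classical
  set Hs : Set G := (H : Set G) with hHs
  have hne : Hs.Nonempty := ⟨1, H.one_mem⟩
  -- the "radius" function
  set r : G → ℕ := fun x => sSup ((fun h => wordDist S x h) '' Hs) with hr
  have himg : ∀ x : G, ((fun h => wordDist S x h) '' Hs).Finite := fun x => hH.image _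
  have himgne : ∀ x : G, ((fun h => wordDist S x h) '' Hs).Nonempty := fun x => hne.image _
  have hle_r : ∀ x : G, ∀ y ∈ Hs, wordDist S x y ≤ r x := by
    intro x y hy
    exact le_csSup (himg x).bddAbove ⟨y, hy, rfl⟩
  have hr_mem : ∀ x : G, ∃ y ∈ Hs, wordDist S x y = r x := by
    intro x
    obtain ⟨y, hy, hxy⟩ := (himgne x).csSup_mem (himg x)
    exact ⟨y, hy, hxy⟩
  -- invariance of r under left multiplication by H
  have hr_inv : ∀ h ∈ H, ∀ x : G, r (h * x) = r x := by
    intro h hh x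
    have : (fun y => wordDist S (h * x) y) '' Hs = (fun y => wordDist S x y) '' Hs := by
      ext n
      constructor
      · rintro ⟨y, hy, rfl⟩
        refine ⟨h⁻¹ * y, H.mul_mem (H.inv_mem hh) hy, ?_⟩
        show wordDist S x (h⁻¹ * y) = wordDist S (h * x) y
        rw [← wordDist_mul_left h x (h⁻¹ * y), mul_inv_cancel_left]
      · rintro ⟨y, hy, rfl⟩
        refine ⟨h * y, H.mul_mem hh hy, ?_⟩
        show wordDist S (h * x) (h * y) = wordDist S x y
        rw [wordDist_mul_left]
    simp only [hr, this]
  -- choose a quasi-center x₀ minimizing r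
  set r₀ : ℕ := sInf (Set.range r) with hr₀
  obtain ⟨x₀, hx₀⟩ : ∃ x : G, r x = r₀ := Nat.sInf_mem (Set.range_nonempty r)
  have hr₀_le : ∀ m : G, r₀ ≤ r m := fun m => Nat.sInf_le ⟨m, rfl⟩
  refine ⟨x₀, ?_⟩
  rintro g ⟨h, hh, rfl⟩
  -- reduce to bounding wordDist x₀ (h * x₀)
  have hred : wordDist S 1 (x₀⁻¹ * h * x₀) = wordDist S x₀ (h * x₀) := by
    have := wordDist_mul_left (S := S) x₀ 1 (x₀⁻¹ * h * x₀)
    rw [← this, mul_one]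
    congr 1
    group
  simp only [Set.mem_setOf_eq, hred]
  set d : ℕ := wordDist S x₀ (h * x₀) with hd
  rcases Nat.eq_zero_or_pos d with hd0 | hdpos
  · rw [hd0]; push_cast; linarith
  -- split a geodesic word at its midpoint
  obtain ⟨l, hl, hlen, hp⟩ := wordDist_spec hsymm hgen x₀ (h * x₀)
  set k : ℕ := (d + 1) / 2 with hk
  have hkd : k ≤ d := by omega
  set m : G := x₀ * (l.take k).prod with hm
  have hxm : wordDist S x₀ m ≤ k := by
    have h1 : wordDist S x₀ m ≤ (l.take k).length := by
      refine wordDist_le (fun s hs => hl s (List.mem_of_mem_take hs)) ?_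
      rw [hm]; group
    calc wordDist S x₀ m ≤ (l.take k).length := h1
      _ ≤ k := by simp
  have hmx : wordDist S m (h * x₀) ≤ d - k := by
    have h1 : wordDist S m (h * x₀) ≤ (l.drop k).length := by
      refine wordDist_le (fun s hs => hl s (List.mem_of_mem_drop hs)) ?_
      have hsplit : (l.take k).prod * (l.drop k).prod = l.prod := by
        rw [← List.prod_append, List.take_append_drop]
      calc m⁻¹ * (h * x₀) = (l.take k).prod⁻¹ * (x₀⁻¹ * (h * x₀)) := by rw [hm]; group
        _ = (l.drop k).prod := by rw [hp, ← hsplit, inv_mul_cancel_left]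
    calc wordDist S m (h * x₀) ≤ (l.drop k).length := h1
      _ = d - k := by rw [List.length_drop, hlen]
  have hxm' : wordDist S (h * x₀) m ≤ d - k := by
    calc wordDist S (h * x₀) m ≤ wordDist S m (h * x₀) := wordDist_symm_le hsymm hgen _ _
      _ ≤ d - k := hmx
  -- pick the farthest orbit point from m
  obtain ⟨y, hy, hmy⟩ := hr_mem m
  -- hyperbolicity
  have key := hhyp x₀ (h * x₀) m y
  simp only at key
  have h1 : (wordDist S x₀ y : ℝ) ≤ r₀ := by
    have := hle_r x₀ y hy; rw [hx₀] at this; exact_mod_cast this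
  have h2 : (wordDist S (h * x₀) y : ℝ) ≤ r₀ := by
    have := hle_r (h * x₀) y hy; rw [hr_inv h hh, hx₀] at this; exact_mod_cast this
  have h3 : (r₀ : ℝ) ≤ wordDist S m y := by
    have := hr₀_le m; rw [← hmy] at this; exact_mod_cast this
  have h4 : (wordDist S x₀ m : ℝ) ≤ k := by exact_mod_cast hxm
  have h5 : (wordDist S (h * x₀) m : ℝ) ≤ (d : ℝ) - k := by
    have : (wordDist S (h * x₀) m : ℝ) ≤ ((d - k : ℕ) : ℝ) := by exact_mod_cast hxm'
    have hcast : ((d - k : ℕ) : ℝ) = (d : ℝ) - k := by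
      rw [Nat.cast_sub hkd]
    linarith [this, hcast.le, hcast.ge]
  have hdk : (d : ℝ) - k ≤ k := by
    have : d - k ≤ k := by omega
    have := (Nat.cast_le (α := ℝ)).mpr this
    rw [Nat.cast_sub hkd] at this
    exact this
  have hmax : max ((wordDist S x₀ m : ℝ) + wordDist S (h * x₀) y)
      ((wordDist S x₀ y : ℝ) + wordDist S (h * x₀) m) ≤ (k : ℝ) + r₀ := by
    apply max_le <;> linarith
  have hdle : (d : ℝ) ≤ (k : ℝ) + 2 * δ := by
    have : (d : ℝ) + r₀ ≤ (k : ℝ) + r₀ + 2 * δ := by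
      calc (d : ℝ) + r₀ ≤ (wordDist S x₀ (h * x₀) : ℝ) + wordDist S m y := by
            rw [← hd]; linarith
        _ ≤ _ + 2 * δ := key
        _ ≤ (k : ℝ) + r₀ + 2 * δ := by linarith
    linarith
  have hk2 : 2 * (k : ℝ) ≤ (d : ℝ) + 1 := by
    have : 2 * k ≤ d + 1 := by omega
    exact_mod_cast this
  linarith
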